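/- arXiv:1804.00296 — 3 statements merged into one kernel-verified Lean document; each statement's English description precedes it below -/
import Mathlib

section
/- Let p ∈ 𝔻, λ ∈ ℂ with |λ| = 1, and σ(z) = λ(p - z)/(1 - conj(p)·z), k_p(z) = sqrt(1 - |p|²)/(1 - conj(p)·z). If conj(k_p(conj(z))) · k_p(conj(σ(conj(z)))) = 1 for all z ∈ 𝔻, then λp = conj(p). -/
/-!
Evaluating the hypothesis at `z = 0` gives `k_p(0) · k_p(conj(λp)) = 1`, i.e.
`1 - |p|² = 1 - conj(p) · conj(λp)`. Hence `conj(p) · p = conj(p) · conj(λp)`, and cancelling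
`conj p` (the case `p = 0` being trivial) and conjugating gives `λp = conj p`.
-/

open Complex

theorem ofReal_eq_of_sqrt_mul_sqrt_div_eq_one {x : ℝ} {w : ℂ}
    (h : (Real.sqrt x : ℂ) * ((Real.sqrt x : ℂ) / w) = 1) : (x : ℂ) = w := by
  have hsqrt : Real.sqrt x ≠ 0 := by
    rintro hx
    simp [hx] at h
  have hw : w ≠ 0 := by
    rintro rfl
    simp at h
  have hx : 0 ≤ x := (Real.sqrt_ne_zero'.mp hsqrt).le
  rwa [← mul_div_assoc, div_eq_one_iff_eq hw, ← ofReal_mul, Real.mul_self_sqrt hx] at h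

theorem mul_eq_conj_of_conj_mul_eq {p lam : ℂ}
    (h : starRingEnd ℂ p * p = starRingEnd ℂ p * starRingEnd ℂ (lam * p)) :
    lam * p = starRingEnd ℂ p := by
  rcases eq_or_ne p 0 with rfl | hp
  · simp
  · have hp' : starRingEnd ℂ p ≠ 0 := (map_ne_zero _).mpr hp
    simpa using congrArg (starRingEnd ℂ) (mul_left_cancel₀ hp' h).symm

theorem stmt1_general (p lam : ℂ)
    (σ kp : ℂ → ℂ)
    (hσ : ∀ z : ℂ, σ z = lam * (p - z) / (1 - (starRingEnd ℂ) p * z))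
    (hk : ∀ z : ℂ, kp z = (Real.sqrt (1 - ‖p‖ ^ 2) : ℂ) / (1 - (starRingEnd ℂ) p * z))
    (h : ∀ z : ℂ, ‖z‖ < 1 →
      (starRingEnd ℂ) (kp ((starRingEnd ℂ) z)) * kp ((starRingEnd ℂ) (σ ((starRingEnd ℂ) z))) = 1) :
    lam * p = (starRingEnd ℂ) p := by
  have h0 := h 0 (by simp)
  simp only [map_zero, hσ, hk, mul_zero, sub_zero, div_one, conj_ofReal] at h0
  have hnorm := ofReal_eq_of_sqrt_mul_sqrt_div_eq_one h0
  have hnormSq : ((1 - ‖p‖ ^ 2 : ℝ) : ℂ) = 1 - starRingEnd ℂ p * p := by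
    rw [ofReal_sub, ofReal_one, ofReal_pow, ← mul_conj', mul_comm]
  exact mul_eq_conj_of_conj_mul_eq (by linear_combination hnorm.symm.trans hnormSq)

theorem stmt1 (p lam : ℂ) (hp : ‖p‖ < 1) (hlam : ‖lam‖ = 1)
    (σ kp : ℂ → ℂ)
    (hσ : ∀ z : ℂ, σ z = lam * (p - z) / (1 - (starRingEnd ℂ) p * z))
    (hk : ∀ z : ℂ, kp z = (Real.sqrt (1 - ‖p‖ ^ 2) : ℂ) / (1 - (starRingEnd ℂ) p * z))
    (h : ∀ z : ℂ, ‖z‖ < 1 →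
      (starRingEnd ℂ) (kp ((starRingEnd ℂ) z)) * kp ((starRingEnd ℂ) (σ ((starRingEnd ℂ) z))) = 1) :
    lam * p = (starRingEnd ℂ) p :=
  stmt1_general p lam σ kp hσ hk h
end

section
/- Suppose φ(z) = (az+b)/(cz+d) with ad - bc ≠ 0 is a linear fractional self-map of the unit disk fixing a boundary point η (|η| = 1, φ(η) = η), and suppose |b| = |c|. Then φ* ∘ φ = φ ∘ φ*, where φ*(z) = (conj(a)z - conj(c))/(-conj(b)z + conj(d)); concretely, the Möbius transformations ((|a|² - |c|²)z + b·conj(a) - d·conj(c)) / ((conj(d)c - conj(b)a)z + |d|² - |b|²) and ((|a|² - |b|²)z + b·conj(d) - a·conj(c)) / ((conj(a)c - conj(b)d)z + |d|² - |c|²) are equal as Möbius maps. -/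
/-!
Clearing the denominator in φ(η) = η and multiplying by η̄ = η⁻¹ gives a - d = cη - bη̄.
Conjugating this and using |b| = |c| yields c (d̄ - ā) = b̄ (a - d), and this identity together with
its conjugate makes the coefficients of the two Möbius maps agree entry by entry.
-/

open ComplexConjugate

namespace Complex

lemma mul_conj_eq_mul_conj_of_norm_eq {b c : ℂ} (h : ‖b‖ = ‖c‖) : b * conj b = c * conj c := by
  rw [RCLike.mul_conj, RCLike.mul_conj, h]

lemma sub_eq_of_moebius_fixedPt_of_norm_eq_one {a b c d η : ℂ} (hη : ‖η‖ = 1)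
    (hden : c * η + d ≠ 0) (hfix : (a * η + b) / (c * η + d) = η) :
    a - d = c * η - b * conj η := by
  have hunit : η * conj η = 1 := by
    rw [RCLike.mul_conj, hη]
    norm_num
  have hcleared := (div_eq_iff hden).mp hfix
  linear_combination conj η * hcleared + (d + c * η - a) * hunit

lemma mul_conj_sub_eq_conj_mul_sub {a b c d η : ℂ} (hbc : ‖b‖ = ‖c‖)
    (h : a - d = c * η - b * conj η) :
    c * (conj d - conj a) = conj b * (a - d) := by
  have hconj : conj a - conj d = conj c * conj η - conj b * η := by
    simpa using congrArg conj h
  linear_combination -c * hconj - conj b * h + conj η * mul_conj_eq_mul_conj_of_norm_eq hbc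

end Complex

theorem stmt8_general (a b c d η : ℂ)
    (hη : ‖η‖ = 1) (hden : c * η + d ≠ 0)
    (hfix : (a * η + b) / (c * η + d) = η)
    (hbc : ‖b‖ = ‖c‖) :
    ∀ z : ℂ,
      ((starRingEnd ℂ) d * c - (starRingEnd ℂ) b * a) * z + (d * (starRingEnd ℂ) d - b * (starRingEnd ℂ) b) ≠ 0 →
      ((starRingEnd ℂ) a * c - (starRingEnd ℂ) b * d) * z + (d * (starRingEnd ℂ) d - c * (starRingEnd ℂ) c) ≠ 0 →
      ((a * (starRingEnd ℂ) a - c * (starRingEnd ℂ) c) * z + (b * (starRingEnd ℂ) a - d * (starRingEnd ℂ) c)) /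
        (((starRingEnd ℂ) d * c - (starRingEnd ℂ) b * a) * z + (d * (starRingEnd ℂ) d - b * (starRingEnd ℂ) b)) =
      ((a * (starRingEnd ℂ) a - b * (starRingEnd ℂ) b) * z + (b * (starRingEnd ℂ) d - a * (starRingEnd ℂ) c)) /
        (((starRingEnd ℂ) a * c - (starRingEnd ℂ) b * d) * z + (d * (starRingEnd ℂ) d - c * (starRingEnd ℂ) c)) := by
  intro z _ _
  have key := Complex.mul_conj_sub_eq_conj_mul_sub hbc
    (Complex.sub_eq_of_moebius_fixedPt_of_norm_eq_one hη hden hfix)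
  have hcoeff_z : conj d * c - conj b * a = conj a * c - conj b * d := by
    linear_combination key
  have key_conj : conj c * (d - a) = b * (conj a - conj d) := by
    simpa using congrArg conj key
  have hcoeff_one : b * conj a - d * conj c = b * conj d - a * conj c := by
    linear_combination -key_conj
  rw [hcoeff_z, hcoeff_one, Complex.mul_conj_eq_mul_conj_of_norm_eq hbc]

theorem stmt8 (a b c d η : ℂ) (hdet : a * d - b * c ≠ 0) (hd : d ≠ 0)
    (hη : ‖η‖ = 1) (hden : c * η + d ≠ 0)
    (hfix : (a * η + b) / (c * η + d) = η)
    (hbc : ‖b‖ = ‖c‖) :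
    ∀ z : ℂ,
      ((starRingEnd ℂ) d * c - (starRingEnd ℂ) b * a) * z + (d * (starRingEnd ℂ) d - b * (starRingEnd ℂ) b) ≠ 0 →
      ((starRingEnd ℂ) a * c - (starRingEnd ℂ) b * d) * z + (d * (starRingEnd ℂ) d - c * (starRingEnd ℂ) c) ≠ 0 →
      ((a * (starRingEnd ℂ) a - c * (starRingEnd ℂ) c) * z + (b * (starRingEnd ℂ) a - d * (starRingEnd ℂ) c)) /
        (((starRingEnd ℂ) d * c - (starRingEnd ℂ) b * a) * z + (d * (starRingEnd ℂ) d - b * (starRingEnd ℂ) b)) =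
      ((a * (starRingEnd ℂ) a - b * (starRingEnd ℂ) b) * z + (b * (starRingEnd ℂ) d - a * (starRingEnd ℂ) c)) /
        (((starRingEnd ℂ) a * c - (starRingEnd ℂ) b * d) * z + (d * (starRingEnd ℂ) d - c * (starRingEnd ℂ) c)) :=
  stmt8_general a b c d η hη hden hfix hbc
end

section
/- Fix r ∈ (0,1). Then for any b₁ ∈ ℂ with |b₁| = 1, the equation b₁ = (r - e^{-iθ})/(r - e^{iθ}) has exactly two solutions θ ∈ [0, 2π); equivalently, writing p = r·e^{iθ} ≠ 0, the equation b₁·p·(conj(p) - 1) + conj(p)·(1 - p) = 0 with |p| = r has exactly two solutions p. -/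
open Complex Real ComplexConjugate

/-!
With `z = e^{iθ}` and `w = r - z`, the equation reads `b₁ w = conj w`, because `e^{-iθ} = conj z`.
For unimodular `b₁` pick `u ≠ 0` with `b₁ u = conj u` (a square root of `conj b₁`); then
`b₁ w = conj w` says exactly that `w / u` is real. So the solutions `z` are the points of the unit
circle on a line through `r`, and since `|r| < 1` there are exactly two of them: `‖r + t u‖² = 1`
is a real quadratic in `t` with positive leading coefficient and negative constant term `r² - 1`.
-/

lemma ncard_setOf_quadratic_eq_zero {a b c : ℝ} (ha : a ≠ 0) (hd : 0 < discrim a b c) :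
    {x : ℝ | a * (x * x) + b * x + c = 0}.ncard = 2 := by
  set s := √(discrim a b c)
  have hs : discrim a b c = s * s := (Real.mul_self_sqrt hd.le).symm
  have hroots : (-b + s) / (2 * a) ≠ (-b - s) / (2 * a) := by
    have : 0 < s := Real.sqrt_pos.2 hd
    rw [Ne, div_left_inj' (mul_ne_zero two_ne_zero ha)]
    linarith
  rw [← Set.ncard_pair hroots]
  congr 1
  ext x
  exact quadratic_eq_zero_iff ha hs x

lemma ncard_setOf_norm_add_real_mul_eq_one {c u : ℂ} (hc : ‖c‖ < 1) (hu : u ≠ 0) :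
    {t : ℝ | ‖c + t * u‖ = 1}.ncard = 2 := by
  have hquad (t : ℝ) : ‖c + t * u‖ = 1 ↔
      normSq u * (t * t) + 2 * (c * conj u).re * t + (normSq c - 1) = 0 := by
    rw [← pow_eq_one_iff_of_nonneg (norm_nonneg _) two_ne_zero, ← normSq_eq_norm_sq, normSq_add]
    simp only [normSq_ofReal, map_mul, conj_ofReal, mul_left_comm c, re_ofReal_mul]
    constructor <;> intro h <;> linear_combination h
  have hu₀ : 0 < normSq u := normSq_pos.2 hu
  have hc₁ : normSq c < 1 := by
    rw [normSq_eq_norm_sq]; nlinarith [norm_nonneg c]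
  simp_rw [hquad]
  refine ncard_setOf_quadratic_eq_zero hu₀.ne' ?_
  rw [discrim]
  nlinarith [sq_nonneg (2 * (c * conj u).re)]

lemma ncard_sphere_inter_line {c u : ℂ} (hc : ‖c‖ < 1) (hu : u ≠ 0) :
    {z : ℂ | ‖z‖ = 1 ∧ ∃ t : ℝ, z = c + t * u}.ncard = 2 := by
  have hinj : Function.Injective fun t : ℝ => c + t * u := fun s t h => by
    simpa [hu] using h
  rw [← ncard_setOf_norm_add_real_mul_eq_one hc hu, ← Set.ncard_image_of_injective _ hinj]
  congr 1
  ext z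
  constructor
  · rintro ⟨hz, t, rfl⟩
    exact ⟨t, hz, rfl⟩
  · rintro ⟨t, ht, rfl⟩
    exact ⟨ht, t, rfl⟩

lemma ncard_setOf_Ico_exp_mul_I (P : ℂ → Prop) :
    {θ : ℝ | θ ∈ Set.Ico 0 (2 * π) ∧ P (exp (θ * I))}.ncard = {z : ℂ | ‖z‖ = 1 ∧ P z}.ncard := by
  have hinj : Set.InjOn (fun θ : ℝ => exp (θ * I)) (Set.Ico 0 (2 * π)) :=
    Subtype.val_injective.comp_injOn (Circle.exp_injOn_Ico (by simp))
  rw [← (hinj.mono fun θ hθ => hθ.1).ncard_image]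
  congr 1
  ext z
  constructor
  · rintro ⟨θ, ⟨-, hP⟩, rfl⟩
    exact ⟨norm_exp_ofReal_mul_I θ, hP⟩
  · rintro ⟨hz, hP⟩
    obtain ⟨θ, hθ, he⟩ := Circle.periodic_exp.exists_mem_Ico₀ two_pi_pos (arg z)
    have hθz : exp (θ * I) = z := by
      rw [← Circle.coe_exp, ← he, Circle.coe_exp]
      simpa [hz] using norm_mul_exp_arg_mul_I z
    exact ⟨θ, ⟨hθ, hθz ▸ hP⟩, hθz⟩

lemma exists_ne_zero_mul_eq_conj {b : ℂ} (hb : ‖b‖ = 1) : ∃ u : ℂ, u ≠ 0 ∧ b * u = conj u := by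
  refine ⟨exp (-(arg b / 2 : ℝ) * I), exp_ne_zero _, ?_⟩
  nth_rw 1 [← norm_mul_exp_arg_mul_I b]
  rw [hb, ofReal_one, one_mul, ← Complex.exp_add, ← exp_conj]
  congr 1
  simp only [map_mul, map_neg, conj_ofReal, conj_I]
  push_cast
  ring

lemma mul_eq_conj_iff_exists_real_mul {b u w : ℂ} (hu : u ≠ 0) (hbu : b * u = conj u) :
    b * w = conj w ↔ ∃ t : ℝ, w = t * u := by
  constructor
  · intro h
    have hb : b ≠ 0 := by
      rintro rfl
      exact hu (by simpa using hbu.symm)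
    have hreal : conj (w / u) = w / u := by
      rw [map_div₀, ← h, ← hbu, mul_div_mul_left _ _ hb]
    exact ⟨(w / u).re, by rw [conj_eq_iff_re.1 hreal, div_mul_cancel₀ _ hu]⟩
  · rintro ⟨t, rfl⟩
    rw [map_mul, conj_ofReal, ← hbu]
    ring

theorem stmt18 (r : ℝ) (hr : 0 < r) (hr1 : r < 1) (b₁ : ℂ) (hb : ‖b₁‖ = 1) :
    {θ : ℝ | θ ∈ Set.Ico 0 (2 * π) ∧
      b₁ * ((r : ℂ) - Complex.exp (θ * Complex.I)) =
        (r : ℂ) - Complex.exp (-(θ : ℂ) * Complex.I)}.ncard = 2 := by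
  obtain ⟨u, hu, hbu⟩ := exists_ne_zero_mul_eq_conj hb
  have hsol (z : ℂ) : b₁ * (r - z) = r - conj z ↔ ∃ t : ℝ, z = r + t * -u := by
    rw [← conj_ofReal r, ← map_sub, conj_ofReal, mul_eq_conj_iff_exists_real_mul hu hbu]
    refine exists_congr fun t => ?_
    constructor <;> intro h <;> linear_combination -h
  calc _ = {z : ℂ | ‖z‖ = 1 ∧ b₁ * (r - z) = r - conj z}.ncard := by
        rw [← ncard_setOf_Ico_exp_mul_I]
        simp_rw [← exp_conj, map_mul, conj_ofReal, conj_I, mul_neg, neg_mul]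
    _ = {z : ℂ | ‖z‖ = 1 ∧ ∃ t : ℝ, z = r + t * -u}.ncard := by simp_rw [hsol]
    _ = 2 := ncard_sphere_inter_line (by simpa [abs_of_pos hr]) (neg_ne_zero.2 hu)
end
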